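/- (Catalan's identity for bicomplex Pell–Lucas numbers) For every integer n and every integer r, BPL(n)² − BPL(n+r)·BPL(n−r) = 96·(−1)^{n−r+1}·P(r)²·(j + ij). -/

import Mathlib

open scoped TensorProduct

noncomputable def bi : ℂ ⊗[ℝ] ℂ := Complex.I ⊗ₜ[ℝ] 1
noncomputable def bj : ℂ ⊗[ℝ] ℂ := (1 : ℂ) ⊗ₜ[ℝ] Complex.I
noncomputable def bij : ℂ ⊗[ℝ] ℂ := Complex.I ⊗ₜ[ℝ] Complex.I

/-- The bicomplex Pell-Lucas number `BPL n = Q n + Q (n+1) i + Q (n+2) j + Q (n+3) ij`. -/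
noncomputable def BPL (Q : ℤ → ℤ) (n : ℤ) : ℂ ⊗[ℝ] ℂ :=
  (Q n : ℝ) • (1 : ℂ ⊗[ℝ] ℂ) + (Q (n + 1) : ℝ) • bi + (Q (n + 2) : ℝ) • bj +
    (Q (n + 3) : ℝ) • bij

/-!
With `α, β = 1 ± √2` the Binet formulas `Q n = αⁿ + βⁿ` and `P n = (αⁿ - βⁿ) / (α - β)` give
`BPL n = αⁿ α̂ + βⁿ β̂` with `α̂ = 1 + α i + α² j + α³ ij`. In any sequence of this shape the
squared terms cancel in `x n ^ 2 - x (n + r) * x (n - r)`, leaving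
`-(αβ)ⁿ⁻ʳ (αʳ - βʳ)² α̂ β̂ = (-1)ⁿ⁻ʳ⁺¹ · 8 P r ² · α̂ β̂`. Finally `α̂ = (1 + α i)(1 + α² j)` factors,
so `α̂ β̂ = (1 + α i)(1 + β i) · (1 + α² j)(1 + β² j) = 2 (1 + i) · 6 j = 12 (j + ij)`.
-/

lemma bi_mul_bi : bi * bi = -1 := by
  simp [bi, Algebra.TensorProduct.tmul_mul_tmul, Algebra.TensorProduct.one_def,
    TensorProduct.neg_tmul]

lemma bj_mul_bj : bj * bj = -1 := by
  simp [bj, Algebra.TensorProduct.tmul_mul_tmul, Algebra.TensorProduct.one_def,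
    TensorProduct.tmul_neg]

lemma bi_mul_bj : bi * bj = bij := by
  simp [bi, bj, bij, Algebra.TensorProduct.tmul_mul_tmul]

theorem eq_of_recurrence {R : Type*} [Ring R] {c : R} {f g : ℤ → R}
    (hf : ∀ n, f (n + 2) = c * f (n + 1) + f n) (hg : ∀ n, g (n + 2) = c * g (n + 1) + g n)
    (h0 : f 0 = g 0) (h1 : f 1 = g 1) : f = g := by
  suffices h : ∀ n, f n = g n ∧ f (n + 1) = g (n + 1) from funext fun n => (h n).1
  intro n
  induction n using Int.induction_on with
  | zero => exact ⟨h0, h1⟩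
  | succ k ih =>
    refine ⟨ih.2, ?_⟩
    rw [add_assoc, one_add_one_eq_two, hf, hg, ih.1, ih.2]
  | pred k ih =>
    refine ⟨?_, by rw [sub_add_cancel]; exact ih.1⟩
    have hfk := hf (-k - 1)
    have hgk := hg (-k - 1)
    rw [show -(k : ℤ) - 1 + 2 = -k + 1 by ring, show -(k : ℤ) - 1 + 1 = -k by ring] at hfk hgk
    rw [eq_sub_of_add_eq' hfk.symm, eq_sub_of_add_eq' hgk.symm, ih.1, ih.2]

theorem zpow_add_two_of_sq_eq {K : Type*} [Field K] {a c : K} (ha : a ≠ 0)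
    (h : a ^ 2 = c * a + 1) (n : ℤ) : a ^ (n + 2) = c * a ^ (n + 1) + a ^ n := by
  rw [zpow_add₀ ha, zpow_add_one₀ ha, zpow_two, ← pow_two, h]
  ring

theorem sq_sub_mul_binet {K T : Type*} [Field K] [CommRing T] [Module K T]
    [IsScalarTower K T T] [SMulCommClass K T T] {a b : K}
    (ha : a ≠ 0) (hb : b ≠ 0) (u v : T) (n r : ℤ) :
    (a ^ n • u + b ^ n • v) ^ 2 - (a ^ (n + r) • u + b ^ (n + r) • v) *
        (a ^ (n - r) • u + b ^ (n - r) • v) =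
      (-(a * b) ^ (n - r) * (a ^ r - b ^ r) ^ 2) • (u * v) := by
  obtain ⟨m, rfl⟩ : ∃ m, n = m + r := ⟨n - r, by ring⟩
  rw [add_sub_cancel_right, add_assoc]
  simp only [zpow_add₀ ha, zpow_add₀ hb, mul_zpow, sq, add_mul, mul_add, smul_mul_smul_comm,
    mul_comm v u]
  module

lemma one_add_smul_mul_one_add_smul {R A : Type*} [CommRing R] [Ring A] [Algebra R A] {x : A}
    (hx : x * x = -1) (a b : R) :
    (1 + a • x) * (1 + b • x) = (1 - a * b) • (1 : A) + (a + b) • x := by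
  simp only [add_mul, mul_add, one_mul, mul_one, smul_mul_smul_comm, hx]
  module

noncomputable def binetVector (a : ℝ) : ℂ ⊗[ℝ] ℂ :=
  (1 : ℂ ⊗[ℝ] ℂ) + a • bi + (a ^ 2) • bj + (a ^ 3) • bij

lemma binetVector_eq_mul (a : ℝ) : binetVector a = (1 + a • bi) * (1 + a ^ 2 • bj) := by
  rw [binetVector, ← bi_mul_bj]
  simp only [add_mul, mul_add, one_mul, mul_one, smul_mul_smul_comm]
  module

lemma binetVector_mul_binetVector {a b : ℝ} (hsum : a + b = 2) (hprod : a * b = -1) :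
    binetVector a * binetVector b = (12 : ℝ) • (bj + bij) := by
  have hi : (1 + a • bi) * (1 + b • bi) = (2 : ℝ) • (1 + bi) := by
    rw [one_add_smul_mul_one_add_smul bi_mul_bi, hprod, hsum]
    module
  have hj : (1 + a ^ 2 • bj) * (1 + b ^ 2 • bj) = (6 : ℝ) • bj := by
    rw [one_add_smul_mul_one_add_smul bj_mul_bj, ← mul_pow, hprod,
      show a ^ 2 + b ^ 2 = 6 by nlinarith]
    module
  calc binetVector a * binetVector b
      = ((1 + a • bi) * (1 + b • bi)) * ((1 + a ^ 2 • bj) * (1 + b ^ 2 • bj)) := by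
        rw [binetVector_eq_mul, binetVector_eq_mul]; ring
    _ = (12 : ℝ) • (bj + bij) := by
        rw [hi, hj, smul_mul_smul_comm, add_mul, one_mul, bi_mul_bj]
        norm_num

lemma BPL_eq_binet {Q : ℤ → ℤ} {a b : ℝ} (ha : a ≠ 0) (hb : b ≠ 0)
    (hQ : ∀ k, (Q k : ℝ) = a ^ k + b ^ k) (n : ℤ) :
    BPL Q n = a ^ n • binetVector a + b ^ n • binetVector b := by
  simp only [BPL, binetVector, hQ, zpow_add₀ ha, zpow_add₀ hb, zpow_ofNat]
  module

lemma one_add_sqrt_two_ne_zero : 1 + √2 ≠ 0 := by positivity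

lemma one_sub_sqrt_two_ne_zero : 1 - √2 ≠ 0 := by
  nlinarith [Real.sq_sqrt zero_le_two]

lemma one_add_sqrt_two_zpow_add_two (n : ℤ) :
    (1 + √2) ^ (n + 2) = 2 * (1 + √2) ^ (n + 1) + (1 + √2) ^ n :=
  zpow_add_two_of_sq_eq one_add_sqrt_two_ne_zero
    (by linear_combination Real.sq_sqrt zero_le_two) n

lemma one_sub_sqrt_two_zpow_add_two (n : ℤ) :
    (1 - √2) ^ (n + 2) = 2 * (1 - √2) ^ (n + 1) + (1 - √2) ^ n :=
  zpow_add_two_of_sq_eq one_sub_sqrt_two_ne_zero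
    (by linear_combination Real.sq_sqrt zero_le_two) n

lemma pellLucas_eq_binet {Q : ℤ → ℤ} (hQ : ∀ n, Q (n + 2) = 2 * Q (n + 1) + Q n)
    (hQ0 : Q 0 = 2) (hQ1 : Q 1 = 2) (k : ℤ) : (Q k : ℝ) = (1 + √2) ^ k + (1 - √2) ^ k := by
  refine congrFun (eq_of_recurrence (c := 2) (f := fun n => (Q n : ℝ))
    (g := fun n => (1 + √2) ^ n + (1 - √2) ^ n) (fun n => ?_) (fun n => ?_) ?_ ?_) k
  · push_cast [hQ]; rfl
  · rw [one_add_sqrt_two_zpow_add_two, one_sub_sqrt_two_zpow_add_two]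
    ring
  · norm_num [hQ0]
  · norm_num [hQ1]

lemma pell_eq_binet {P : ℤ → ℤ} (hP : ∀ n, P (n + 2) = 2 * P (n + 1) + P n)
    (hP0 : P 0 = 0) (hP1 : P 1 = 1) (k : ℤ) :
    (P k : ℝ) = ((1 + √2) ^ k - (1 - √2) ^ k) / (2 * √2) := by
  refine congrFun (eq_of_recurrence (c := 2) (f := fun n => (P n : ℝ))
    (g := fun n => ((1 + √2) ^ n - (1 - √2) ^ n) / (2 * √2)) (fun n => ?_) (fun n => ?_) ?_ ?_) k
  · push_cast [hP]; rfl
  · rw [one_add_sqrt_two_zpow_add_two, one_sub_sqrt_two_zpow_add_two]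
    ring
  · simp [hP0]
  · rw [hP1, Int.cast_one, zpow_one, zpow_one, eq_div_iff (by positivity)]
    ring

theorem bicomplexPellLucas_catalan (P Q : ℤ → ℤ)
    (hP : ∀ n : ℤ, P (n + 2) = 2 * P (n + 1) + P n) (hP0 : P 0 = 0) (hP1 : P 1 = 1)
    (hQ : ∀ n : ℤ, Q (n + 2) = 2 * Q (n + 1) + Q n) (hQ0 : Q 0 = 2) (hQ1 : Q 1 = 2)
    (n r : ℤ) :
    BPL Q n ^ 2 - BPL Q (n + r) * BPL Q (n - r) =
      (96 * (-1 : ℝ) ^ (n - r + 1) * (P r : ℝ) ^ 2) • (bj + bij) := by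
  have hsqrt : √2 ^ 2 = 2 := Real.sq_sqrt zero_le_two
  have hsum : (1 + √2) + (1 - √2) = 2 := by ring
  have hprod : (1 + √2) * (1 - √2) = -1 := by linear_combination -hsqrt
  have hPr : ((1 + √2) ^ r - (1 - √2) ^ r) ^ 2 = 8 * (P r : ℝ) ^ 2 := by
    rw [pell_eq_binet hP hP0 hP1, div_pow, mul_pow, hsqrt]
    field_simp
    ring
  simp only [BPL_eq_binet one_add_sqrt_two_ne_zero one_sub_sqrt_two_ne_zero
    (pellLucas_eq_binet hQ hQ0 hQ1)]
  calc _ = (-((1 + √2) * (1 - √2)) ^ (n - r) * ((1 + √2) ^ r - (1 - √2) ^ r) ^ 2) •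
        (binetVector (1 + √2) * binetVector (1 - √2)) :=
        sq_sub_mul_binet one_add_sqrt_two_ne_zero one_sub_sqrt_two_ne_zero _ _ n r
    _ = _ := by
        rw [binetVector_mul_binetVector hsum hprod, smul_smul, hprod, hPr,
          zpow_add_one₀ (by norm_num)]
        congr 1
        ring
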